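/- Klein's inequality / nonnegativity of matrix relative entropy: for density matrices P and Q with Q positive definite, tr(P log P − P log Q) ≥ 0, with equality if and only if P = Q. -/

import Mathlib

/-!
Diagonalize `P = ∑ dᵢ uᵢuᵢᵀ` and `Q = ∑ eⱼ vⱼvⱼᵀ`. Every trace `tr (f(P) g(Q))` equals
`∑ᵢⱼ ⟪uᵢ, vⱼ⟫² f(dᵢ) g(eⱼ)`, so when `tr P = tr Q` the relative entropy becomes
`∑ᵢⱼ ⟪uᵢ, vⱼ⟫² eⱼ klFun (dᵢ / eⱼ)` with `klFun x = x log x + 1 - x`, which is nonnegative and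
vanishes only at `x = 1`. If the sum vanishes, then `dᵢ = eⱼ` whenever `⟪uᵢ, vⱼ⟫ ≠ 0`, hence
`‖P - Q‖²_F = ∑ᵢⱼ ⟪uᵢ, vⱼ⟫² (dᵢ - eⱼ)² = 0`.
-/

open Matrix

/-- The principal matrix logarithm of a symmetric real matrix, via the spectral theorem. -/
noncomputable def matLog {n : ℕ} (A : Matrix (Fin n) (Fin n) ℝ) : Matrix (Fin n) (Fin n) ℝ :=
  if h : A.IsHermitian then h.cfc Real.log else 0

open InformationTheory

lemma mul_klFun_div_nonneg {a b : ℝ} (ha : 0 ≤ a) (hb : 0 ≤ b) : 0 ≤ b * klFun (a / b) :=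
  mul_nonneg hb (klFun_nonneg (div_nonneg ha hb))

lemma mul_klFun_div_eq_zero_iff {a b : ℝ} (ha : 0 ≤ a) (hb : 0 < b) :
    b * klFun (a / b) = 0 ↔ a = b := by
  rw [mul_eq_zero, klFun_eq_zero_iff (div_nonneg ha hb.le), div_eq_one_iff_eq hb.ne']
  simp [hb.ne']

lemma mul_klFun_div_eq {a b : ℝ} (ha : 0 < a) (hb : 0 < b) :
    b * klFun (a / b) = a * Real.log a - a * Real.log b - a + b := by
  rw [klFun_apply, Real.log_div ha.ne' hb.ne']
  field_simp
  ring

namespace Matrix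

variable {ι : Type*} [Fintype ι] [DecidableEq ι]

lemma trace_diagonal_mul_mul_diagonal_mul_conjTranspose (d l : ι → ℝ) (A : Matrix ι ι ℝ) :
    (diagonal d * A * diagonal l * Aᴴ).trace = ∑ i, ∑ j, A i j ^ 2 * (d i * l j) := by
  simp only [trace, diag, mul_apply, diagonal_apply, conjTranspose_apply, star_trivial, ite_mul,
    zero_mul, Finset.sum_ite_eq, Finset.mem_univ, if_true, Finset.sum_mul]
  refine Finset.sum_congr rfl fun i _ => Finset.sum_congr rfl fun j _ => ?_
  simp only [mul_ite, mul_zero, ite_mul, zero_mul, Finset.sum_ite_eq', Finset.mem_univ, if_true]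
  ring

namespace IsHermitian

variable {A P Q : Matrix ι ι ℝ}

/-- Entry `(i, j)` is `⟪uᵢ, vⱼ⟫` for the eigenvector bases `u` of `P` and `v` of `Q`. -/
noncomputable def eigenvectorOverlap (hP : P.IsHermitian) (hQ : Q.IsHermitian) : Matrix ι ι ℝ :=
  star (hP.eigenvectorUnitary : Matrix ι ι ℝ) * hQ.eigenvectorUnitary

lemma cfc_eq_mul_diagonal_mul (hA : A.IsHermitian) (f : ℝ → ℝ) :
    cfc f A = (hA.eigenvectorUnitary : Matrix ι ι ℝ) * diagonal (f ∘ hA.eigenvalues) *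
      star (hA.eigenvectorUnitary : Matrix ι ι ℝ) := by
  rw [hA.cfc_eq, IsHermitian.cfc, Unitary.conjStarAlgAut_apply]
  rfl

lemma trace_cfc_mul_cfc (hP : P.IsHermitian) (hQ : Q.IsHermitian) (f g : ℝ → ℝ) :
    (cfc f P * cfc g Q).trace = ∑ i, ∑ j,
      eigenvectorOverlap hP hQ i j ^ 2 * (f (hP.eigenvalues i) * g (hQ.eigenvalues j)) := by
  set U : Matrix ι ι ℝ := (hP.eigenvectorUnitary : Matrix ι ι ℝ)
  set V : Matrix ι ι ℝ := (hQ.eigenvectorUnitary : Matrix ι ι ℝ)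
  set D := diagonal (f ∘ hP.eigenvalues)
  set E := diagonal (g ∘ hQ.eigenvalues)
  rw [cfc_eq_mul_diagonal_mul hP, cfc_eq_mul_diagonal_mul hQ,
    ← trace_diagonal_mul_mul_diagonal_mul_conjTranspose, ← star_eq_conjTranspose,
    eigenvectorOverlap, star_mul, star_star]
  calc (U * D * star U * (V * E * star V)).trace
      = (U * (D * (star U * V) * E * star V)).trace := by simp only [mul_assoc]
    _ = _ := by rw [trace_mul_comm]; simp only [mul_assoc]; rfl

lemma trace_cfc_left (hP : P.IsHermitian) (hQ : Q.IsHermitian) (f : ℝ → ℝ) :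
    (cfc f P).trace = ∑ i, ∑ j, eigenvectorOverlap hP hQ i j ^ 2 * f (hP.eigenvalues i) := by
  simpa [cfc_one ℝ Q hQ.isSelfAdjoint] using trace_cfc_mul_cfc hP hQ f 1

lemma trace_cfc_right (hP : P.IsHermitian) (hQ : Q.IsHermitian) (g : ℝ → ℝ) :
    (cfc g Q).trace = ∑ i, ∑ j, eigenvectorOverlap hP hQ i j ^ 2 * g (hQ.eigenvalues j) := by
  simpa [cfc_one ℝ P hP.isSelfAdjoint] using trace_cfc_mul_cfc hP hQ 1 g

lemma trace_sub_mul_sub (hP : P.IsHermitian) (hQ : Q.IsHermitian) :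
    ((P - Q) * (P - Q)).trace = ∑ i, ∑ j,
      eigenvectorOverlap hP hQ i j ^ 2 * (hP.eigenvalues i - hQ.eigenvalues j) ^ 2 := by
  have hPP := trace_cfc_left hP hQ (fun x => x * x)
  have hQQ := trace_cfc_right hP hQ (fun x => x * x)
  have hPQ := trace_cfc_mul_cfc hP hQ (fun x => x) (fun x => x)
  rw [cfc_mul _ _ P, cfc_id' ℝ P hP.isSelfAdjoint] at hPP
  rw [cfc_mul _ _ Q, cfc_id' ℝ Q hQ.isSelfAdjoint] at hQQ
  rw [cfc_id' ℝ P hP.isSelfAdjoint, cfc_id' ℝ Q hQ.isSelfAdjoint] at hPQ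
  calc ((P - Q) * (P - Q)).trace = (P * P).trace - 2 * (P * Q).trace + (Q * Q).trace := by
        rw [sub_mul, mul_sub, mul_sub, trace_sub, trace_sub, trace_sub, trace_mul_comm Q P]
        ring
    _ = _ := by
        rw [hPP, hPQ, hQQ, Finset.mul_sum, ← Finset.sum_sub_distrib, ← Finset.sum_add_distrib]
        refine Finset.sum_congr rfl fun i _ => ?_
        rw [Finset.mul_sum, ← Finset.sum_sub_distrib, ← Finset.sum_add_distrib]
        exact Finset.sum_congr rfl fun j _ => by ring

lemma eq_of_eigenvalues_eq_of_overlap_ne_zero (hP : P.IsHermitian) (hQ : Q.IsHermitian)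
    (h : ∀ i j, eigenvectorOverlap hP hQ i j ≠ 0 → hP.eigenvalues i = hQ.eigenvalues j) :
    P = Q := by
  have hzero : ((P - Q)ᴴ * (P - Q)).trace = 0 := by
    rw [(hP.sub hQ).eq, trace_sub_mul_sub hP hQ]
    refine Finset.sum_eq_zero fun i _ => Finset.sum_eq_zero fun j _ => ?_
    by_cases hij : eigenvectorOverlap hP hQ i j = 0
    · simp [hij]
    · simp [h i j hij]
  exact sub_eq_zero.mp (trace_conjTranspose_mul_self_eq_zero_iff.mp hzero)

end IsHermitian

end Matrix

lemma matLog_eq_cfc {n : ℕ} {A : Matrix (Fin n) (Fin n) ℝ} (hA : A.IsHermitian) :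
    matLog A = cfc Real.log A := by
  rw [matLog, dif_pos hA, hA.cfc_eq]

lemma mul_matLog_eq_cfc {n : ℕ} {A : Matrix (Fin n) (Fin n) ℝ} (hA : A.IsHermitian) :
    A * matLog A = cfc (fun x => x * Real.log x) A := by
  rw [matLog_eq_cfc hA,
    cfc_mul (fun x => x) Real.log A (hg := A.finite_real_spectrum.continuousOn _),
    cfc_id' ℝ A hA.isSelfAdjoint]

namespace Matrix.PosDef

variable {n : ℕ} {P Q : Matrix (Fin n) (Fin n) ℝ}

lemma trace_mul_matLog_sub_mul_matLog (hP : P.PosDef) (hQ : Q.PosDef) (htr : P.trace = Q.trace) :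
    (P * matLog P - P * matLog Q).trace = ∑ i, ∑ j, hP.1.eigenvectorOverlap hQ.1 i j ^ 2 *
      (hQ.1.eigenvalues j * klFun (hP.1.eigenvalues i / hQ.1.eigenvalues j)) := by
  have hPlogP := hP.1.trace_cfc_left hQ.1 (fun x => x * Real.log x)
  have hPlogQ := hP.1.trace_cfc_mul_cfc hQ.1 (fun x => x) Real.log
  have hPtr := hP.1.trace_cfc_left hQ.1 (fun x => x)
  have hQtr := hP.1.trace_cfc_right hQ.1 (fun x => x)
  rw [← mul_matLog_eq_cfc hP.1] at hPlogP
  rw [cfc_id' ℝ P hP.1.isSelfAdjoint, ← matLog_eq_cfc hQ.1] at hPlogQ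
  rw [cfc_id' ℝ P hP.1.isSelfAdjoint] at hPtr
  rw [cfc_id' ℝ Q hQ.1.isSelfAdjoint] at hQtr
  calc (P * matLog P - P * matLog Q).trace
      = (P * matLog P).trace - (P * matLog Q).trace - P.trace + Q.trace := by
        rw [trace_sub, htr]; ring
    _ = _ := by
        rw [hPlogP, hPlogQ, hPtr, hQtr]
        simp only [← Finset.sum_sub_distrib, ← Finset.sum_add_distrib]
        refine Finset.sum_congr rfl fun i _ => Finset.sum_congr rfl fun j _ => ?_
        rw [mul_klFun_div_eq (hP.eigenvalues_pos i) (hQ.eigenvalues_pos j)]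
        ring

lemma sq_eigenvectorOverlap_mul_klFun_nonneg (hP : P.PosDef) (hQ : Q.PosDef) (i j : Fin n) :
    0 ≤ hP.1.eigenvectorOverlap hQ.1 i j ^ 2 *
      (hQ.1.eigenvalues j * klFun (hP.1.eigenvalues i / hQ.1.eigenvalues j)) :=
  mul_nonneg (sq_nonneg _)
    (mul_klFun_div_nonneg (hP.eigenvalues_pos i).le (hQ.eigenvalues_pos j).le)

lemma trace_mul_matLog_sub_mul_matLog_nonneg (hP : P.PosDef) (hQ : Q.PosDef)
    (htr : P.trace = Q.trace) : 0 ≤ (P * matLog P - P * matLog Q).trace := by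
  rw [hP.trace_mul_matLog_sub_mul_matLog hQ htr]
  exact Finset.sum_nonneg fun i _ => Finset.sum_nonneg fun j _ =>
    sq_eigenvectorOverlap_mul_klFun_nonneg hP hQ i j

lemma eq_of_trace_mul_matLog_sub_mul_matLog_eq_zero (hP : P.PosDef) (hQ : Q.PosDef)
    (htr : P.trace = Q.trace) (h : (P * matLog P - P * matLog Q).trace = 0) : P = Q := by
  rw [hP.trace_mul_matLog_sub_mul_matLog hQ htr, Fintype.sum_eq_zero_iff_of_nonneg
    fun i => Finset.sum_nonneg fun j _ => sq_eigenvectorOverlap_mul_klFun_nonneg hP hQ i j] at h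
  refine hP.1.eq_of_eigenvalues_eq_of_overlap_ne_zero hQ.1 fun i j hij => ?_
  have hrow := (Fintype.sum_eq_zero_iff_of_nonneg
    (sq_eigenvectorOverlap_mul_klFun_nonneg hP hQ i)).mp (congrFun h i)
  rw [← mul_klFun_div_eq_zero_iff (hP.eigenvalues_pos i).le (hQ.eigenvalues_pos j)]
  simpa [hij] using congrFun hrow j

end Matrix.PosDef

theorem klein_inequality_general {n : ℕ} (P Q : Matrix (Fin n) (Fin n) ℝ)
    (hPpd : P.PosDef) (hPtr : P.trace = 1)
    (hQpd : Q.PosDef) (hQtr : Q.trace = 1) :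
    0 ≤ (P * matLog P - P * matLog Q).trace ∧
    ((P * matLog P - P * matLog Q).trace = 0 ↔ P = Q) := by
  have htr : P.trace = Q.trace := hPtr.trans hQtr.symm
  refine ⟨hPpd.trace_mul_matLog_sub_mul_matLog_nonneg hQpd htr,
    hPpd.eq_of_trace_mul_matLog_sub_mul_matLog_eq_zero hQpd htr, ?_⟩
  rintro rfl
  rw [sub_self, trace_zero]

/-- Klein's inequality: for density matrices `P` and `Q` that are
positive definite, `tr(P log P − P log Q) ≥ 0`, with equality iff `P = Q`. -/
theorem klein_inequality {n : ℕ} (P Q : Matrix (Fin n) (Fin n) ℝ)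
    (hPsymm : P.IsSymm) (hPpd : P.PosDef) (hPtr : P.trace = 1)
    (hQsymm : Q.IsSymm) (hQpd : Q.PosDef) (hQtr : Q.trace = 1) :
    0 ≤ (P * matLog P - P * matLog Q).trace ∧
    ((P * matLog P - P * matLog Q).trace = 0 ↔ P = Q) :=
  klein_inequality_general P Q hPpd hPtr hQpd hQtr
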